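/- Let f = Σ_{i=1}^k w_i f_i and g = Σ_{i=1}^k w_i g_i, where the w_i are positive weights summing to 1, the f_i and g_i are probability densities on ℝ^d with f_i > 0, and g_i = f_i for all i except one index l. Then ∫ (f−g)²/f ≤ w_l · (∫ g_l²/f_l − 1). In particular, if f_l(x) = φ_d(x−a) and g_l(x) = φ_d(x−b) are Gaussian densities with ‖a−b‖² ≤ 1, then ∫ (f−g)²/f ≤ w_l·(exp(‖a−b‖²) − 1) ≤ 2·w_l·‖a−b‖². -/

import Mathlib

/-!
Off the index `l` the two mixtures agree, so `f - g = w_l (f_l - g_l)`, while `f ≥ w_l f_l`;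
hence `(f - g)² / f ≤ w_l (f_l - g_l)² / f_l` pointwise. Expanding the square and using that
`f_l` and `g_l` integrate to one gives `∫ (f_l - g_l)² / f_l = ∫ g_l² / f_l - 1`. For Gaussians the
parallelogram law gives `φ(x - b)² / φ(x - a) = exp ‖a - b‖² · φ(x - (2b - a))`, so this
χ²-divergence is `exp ‖a - b‖² - 1`, which is at most `2 ‖a - b‖²` when `‖a - b‖² ≤ 1`.
-/

open MeasureTheory Real ENNReal

/-- A probability density on `EuclideanSpace ℝ (Fin d)`. -/
def IsDensityE (d : ℕ) (f : EuclideanSpace ℝ (Fin d) → ℝ) : Prop :=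
  Measurable f ∧ (∀ x, 0 ≤ f x) ∧ (∫⁻ x, ENNReal.ofReal (f x)) = 1

/-- The standard Gaussian density on ℝ^d: `φ_d(x) = (2π)^{-d/2} exp(-‖x‖²/2)`. -/
noncomputable def stdGauss (d : ℕ) (x : EuclideanSpace ℝ (Fin d)) : ℝ :=
  (2 * Real.pi) ^ (-(d : ℝ)/2) * Real.exp (-(‖x‖^2)/2)

section ChiSquare

variable {ι α : Type*} [Fintype ι] [MeasurableSpace α] {μ : Measure α}

theorem sq_sub_div_mixture_le {w f g : ι → ℝ} {l : ι} (hw : ∀ i, 0 ≤ w i) (hf : ∀ i, 0 ≤ f i)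
    (hfl : 0 < f l) (hfg : ∀ i, i ≠ l → g i = f i) :
    (∑ i, w i * f i - ∑ i, w i * g i) ^ 2 / ∑ i, w i * f i ≤ w l * ((f l - g l) ^ 2 / f l) := by
  have hdiff : ∑ i, w i * f i - ∑ i, w i * g i = w l * (f l - g l) := by
    rw [← Finset.sum_sub_distrib, Finset.sum_eq_single_of_mem l (Finset.mem_univ l)
      fun i _ hi => by rw [hfg i hi, sub_self]]
    ring
  have hsum : w l * f l ≤ ∑ i, w i * f i :=
    Finset.single_le_sum (f := fun i => w i * f i) (fun i _ => mul_nonneg (hw i) (hf i))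
      (Finset.mem_univ l)
  rcases (hw l).eq_or_lt with hwl | hwl
  · simp [hdiff, ← hwl]
  calc (∑ i, w i * f i - ∑ i, w i * g i) ^ 2 / ∑ i, w i * f i
      ≤ (w l * (f l - g l)) ^ 2 / (w l * f l) := by
        rw [hdiff]; exact div_le_div_of_nonneg_left (sq_nonneg _) (by positivity) hsum
    _ = w l * ((f l - g l) ^ 2 / f l) := by field_simp

theorem lintegral_sq_sub_div_mixture_le {w : ι → ℝ} {f g : ι → α → ℝ} {l : ι}
    (hw : ∀ i, 0 ≤ w i) (hf : ∀ i x, 0 ≤ f i x) (hfl : ∀ x, 0 < f l x)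
    (hfg : ∀ i, i ≠ l → g i = f i) :
    ∫⁻ x, ENNReal.ofReal ((∑ i, w i * f i x - ∑ i, w i * g i x) ^ 2 / ∑ i, w i * f i x) ∂μ
      ≤ ENNReal.ofReal (w l) * ∫⁻ x, ENNReal.ofReal ((f l x - g l x) ^ 2 / f l x) ∂μ := by
  rw [← lintegral_const_mul' _ _ ofReal_ne_top]
  refine lintegral_mono fun x => ?_
  rw [← ENNReal.ofReal_mul (hw l)]
  exact ENNReal.ofReal_le_ofReal <| sq_sub_div_mixture_le hw (hf · x) (hfl x)
    fun i hi => congrFun (hfg i hi) x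

theorem lintegral_sq_sub_div_eq {f g : α → ℝ} (hf : Measurable f) (hg : Measurable g)
    (hf_pos : ∀ x, 0 < f x) (hg_nonneg : ∀ x, 0 ≤ g x)
    (hf1 : ∫⁻ x, ENNReal.ofReal (f x) ∂μ = 1) (hg1 : ∫⁻ x, ENNReal.ofReal (g x) ∂μ = 1) :
    ∫⁻ x, ENNReal.ofReal ((f x - g x) ^ 2 / f x) ∂μ
      = ∫⁻ x, ENNReal.ofReal (g x ^ 2 / f x) ∂μ - 1 := by
  have hpt (x : α) : ENNReal.ofReal ((f x - g x) ^ 2 / f x) + 2 * ENNReal.ofReal (g x)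
      = ENNReal.ofReal (g x ^ 2 / f x) + ENNReal.ofReal (f x) := by
    have hfx := hf_pos x
    rw [← ofReal_ofNat 2, ← ENNReal.ofReal_mul zero_le_two,
      ← ENNReal.ofReal_add (by positivity) (mul_nonneg zero_le_two (hg_nonneg x)),
      ← ENNReal.ofReal_add (by positivity) hfx.le]
    congr 1
    field_simp
    ring
  have hint := lintegral_congr (μ := μ) hpt
  rw [lintegral_add_right _ (hg.ennreal_ofReal.const_mul 2),
    lintegral_add_right _ hf.ennreal_ofReal, lintegral_const_mul _ hg.ennreal_ofReal, hg1, hf1,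
    mul_one] at hint
  refine ENNReal.eq_sub_of_add_eq one_ne_top <| (ENNReal.add_left_inj one_ne_top).1 ?_
  rwa [add_assoc, one_add_one_eq_two]

end ChiSquare

theorem integral_stdGauss (d : ℕ) : ∫ x, stdGauss d x = 1 := by
  have hexp (x : EuclideanSpace ℝ (Fin d)) : rexp (-(‖x‖ ^ 2) / 2) = rexp (-(1 / 2) * ‖x‖ ^ 2) := by
    ring_nf
  simp_rw [stdGauss, integral_const_mul, hexp,
    GaussianFourier.integral_rexp_neg_mul_sq_norm (by norm_num : (0 : ℝ) < 1 / 2),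
    finrank_euclideanSpace_fin, div_div_eq_mul_div, div_one, mul_comm π 2,
    ← Real.rpow_add (by positivity : (0 : ℝ) < 2 * π)]
  rw [neg_div, neg_add_cancel, Real.rpow_zero]

theorem lintegral_stdGauss_sub (d : ℕ) (c : EuclideanSpace ℝ (Fin d)) :
    ∫⁻ x, ENNReal.ofReal (stdGauss d (x - c)) = 1 := by
  rw [lintegral_sub_right_eq_self (fun x => ENNReal.ofReal (stdGauss d x)) c,
    ← ofReal_integral_eq_lintegral_ofReal
      (Integrable.of_integral_ne_zero (by simp [integral_stdGauss]))
      (Filter.Eventually.of_forall fun x => by unfold stdGauss; positivity),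
    integral_stdGauss, ofReal_one]

theorem stdGauss_sq_div (d : ℕ) (u v : EuclideanSpace ℝ (Fin d)) :
    stdGauss d u ^ 2 / stdGauss d (u - v) = rexp (‖v‖ ^ 2) * stdGauss d (u + v) := by
  have hpar := parallelogram_law_with_norm ℝ u v
  have hexp : 2 * (-‖u‖ ^ 2 / 2) = ‖v‖ ^ 2 + -‖u + v‖ ^ 2 / 2 + -‖u - v‖ ^ 2 / 2 := by
    linear_combination (1/2 : ℝ) * hpar
  unfold stdGauss
  rw [div_eq_iff (by positivity), mul_pow, ← Real.exp_nat_mul, Nat.cast_ofNat, hexp,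
    Real.exp_add, Real.exp_add]
  ring

theorem lintegral_stdGauss_sq_div (d : ℕ) (a b : EuclideanSpace ℝ (Fin d)) :
    ∫⁻ x, ENNReal.ofReal (stdGauss d (x - b) ^ 2 / stdGauss d (x - a))
      = ENNReal.ofReal (rexp (‖a - b‖ ^ 2)) := by
  have hpt (x : EuclideanSpace ℝ (Fin d)) : stdGauss d (x - b) ^ 2 / stdGauss d (x - a)
      = rexp (‖a - b‖ ^ 2) * stdGauss d (x - (2 • b - a)) := by
    rw [← sub_sub_sub_cancel_right x a b, stdGauss_sq_div]
    congr 2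
    abel
  simp_rw [hpt, ENNReal.ofReal_mul (exp_nonneg _)]
  rw [lintegral_const_mul' _ _ ofReal_ne_top, lintegral_stdGauss_sub, mul_one]

theorem stmt16_general (d k : ℕ)
    (w : Fin k → ℝ) (hw : ∀ i, 0 < w i)
    (f g : Fin k → (EuclideanSpace ℝ (Fin d) → ℝ))
    (hf : ∀ i, IsDensityE d (f i)) (hg : ∀ i, IsDensityE d (g i))
    (hfpos : ∀ i x, 0 < f i x)
    (l : Fin k) (hfg : ∀ i, i ≠ l → g i = f i) :
    (∫⁻ x, ENNReal.ofReal
        ((∑ i, w i * f i x - ∑ i, w i * g i x)^2 / (∑ i, w i * f i x)))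
      ≤ ENNReal.ofReal (w l) *
          ((∫⁻ x, ENNReal.ofReal ((g l x)^2 / f l x)) - 1) ∧
    ∀ a b : EuclideanSpace ℝ (Fin d),
      (∀ x, f l x = stdGauss d (x - a)) → (∀ x, g l x = stdGauss d (x - b)) →
      ‖a - b‖^2 ≤ 1 →
      (∫⁻ x, ENNReal.ofReal
          ((∑ i, w i * f i x - ∑ i, w i * g i x)^2 / (∑ i, w i * f i x)))
        ≤ ENNReal.ofReal (2 * w l * ‖a - b‖^2) := by
  obtain ⟨hfm, -, hf1⟩ := hf l
  obtain ⟨hgm, hg0, hg1⟩ := hg l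
  have hchi := lintegral_sq_sub_div_mixture_le (μ := volume) (fun i => (hw i).le)
    (fun i => (hf i).2.1) (hfpos l) hfg
  rw [lintegral_sq_sub_div_eq hfm hgm (hfpos l) hg0 hf1 hg1] at hchi
  refine ⟨hchi, fun a b hfa hgb hab => hchi.trans ?_⟩
  have habs : |‖a - b‖ ^ 2| = ‖a - b‖ ^ 2 := abs_of_nonneg (sq_nonneg _)
  have hexp := (le_abs_self _).trans (Real.abs_exp_sub_one_le (habs.trans_le hab))
  rw [habs] at hexp
  simp_rw [hfa, hgb]
  rw [lintegral_stdGauss_sq_div, ← ofReal_one, ← ofReal_sub _ zero_le_one,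
    ← ENNReal.ofReal_mul (hw l).le, mul_assoc]
  exact ENNReal.ofReal_le_ofReal <| by nlinarith [hw l]

theorem stmt16 (d k : ℕ) (hd : 1 ≤ d) (hk : 1 ≤ k)
    (w : Fin k → ℝ) (hw : ∀ i, 0 < w i) (hw1 : ∑ i, w i = 1)
    (f g : Fin k → (EuclideanSpace ℝ (Fin d) → ℝ))
    (hf : ∀ i, IsDensityE d (f i)) (hg : ∀ i, IsDensityE d (g i))
    (hfpos : ∀ i x, 0 < f i x)
    (l : Fin k) (hfg : ∀ i, i ≠ l → g i = f i) :
    (∫⁻ x, ENNReal.ofReal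
        ((∑ i, w i * f i x - ∑ i, w i * g i x)^2 / (∑ i, w i * f i x)))
      ≤ ENNReal.ofReal (w l) *
          ((∫⁻ x, ENNReal.ofReal ((g l x)^2 / f l x)) - 1) ∧
    ∀ a b : EuclideanSpace ℝ (Fin d),
      (∀ x, f l x = stdGauss d (x - a)) → (∀ x, g l x = stdGauss d (x - b)) →
      ‖a - b‖^2 ≤ 1 →
      (∫⁻ x, ENNReal.ofReal
          ((∑ i, w i * f i x - ∑ i, w i * g i x)^2 / (∑ i, w i * f i x)))
        ≤ ENNReal.ofReal (2 * w l * ‖a - b‖^2) :=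
  stmt16_general d k w hw f g hf hg hfpos l hfg
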